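/- arXiv:1711.08503 — 3 statements merged into one kernel-verified Lean document; each statement's English description precedes it below -/
import Mathlib

section
/- A rectangle with sides a + b√2 and c + d√2 (both positive, a, b, c, d ∈ ℚ) has nonnegative x-area (a + bx)(c + dx) for every real x if and only if the ratio of its sides (c + d√2)/(a + b√2) is rational. -/
/-!
If `(a + b x)(c + d x) ≥ 0` for every real `x`, the discriminant `(ad - bc)²` of this quadratic
is nonpositive, so `ad = bc` and the coefficient vector `(c, d)` is a rational multiple `q (a, b)`;
the ratio of the sides is then `q`. Conversely, if the ratio is a rational `q`, the irrationality
of `√2` forces `(c, d) = q (a, b)` with `q > 0`, and the area `q (a + b x)²` is nonnegative.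
-/

theorem mul_eq_mul_of_forall_nonneg_mul {K : Type*} [Field K] [LinearOrder K]
    [IsStrictOrderedRing K] {a b c d : K} (h : ∀ x, 0 ≤ (a + b * x) * (c + d * x)) :
    a * d = b * c := by
  have hdisc : discrim (b * d) (a * d + b * c) (a * c) ≤ 0 :=
    discrim_le_zero fun x => (h x).trans_eq (by ring)
  have hsq : (a * d - b * c) ^ 2 = 0 :=
    le_antisymm (by rw [discrim] at hdisc; linarith) (sq_nonneg _)
  exact sub_eq_zero.mp (pow_eq_zero_iff two_ne_zero |>.mp hsq)

theorem exists_eq_mul_of_mul_eq_mul {K : Type*} [Field K] {a b c d : K} (h : a * d = b * c)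
    (hab : a ≠ 0 ∨ b ≠ 0) : ∃ q, c = q * a ∧ d = q * b := by
  rcases hab with ha | hb
  · exact ⟨c / a, by field_simp, by field_simp; linear_combination h⟩
  · exact ⟨d / b, by field_simp; linear_combination -h, by field_simp⟩

theorem Irrational.eq_zero_of_ratCast_add_mul_eq_zero {r : ℝ} (hr : Irrational r) {p q : ℚ}
    (h : (p : ℝ) + q * r = 0) : p = 0 ∧ q = 0 := by
  have hq : q = 0 := by
    by_contra hq
    exact (hr.ratCast_mul hq).ratCast_add p |>.ne_nat 0 (by simpa using h)
  subst hq
  exact ⟨by simpa using h, rfl⟩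

/-- A rectangle with positive sides a + b√2 and c + d√2 (a, b, c, d ∈ ℚ) has
nonnegative x-area (a + bx)(c + dx) for every real x if and only if the ratio of
its sides is rational. -/
theorem xArea_nonneg_iff_ratio_rational
    (a b c d : ℚ)
    (ha : 0 < (a : ℝ) + (b : ℝ) * Real.sqrt 2)
    (hc : 0 < (c : ℝ) + (d : ℝ) * Real.sqrt 2) :
    (∀ x : ℝ, 0 ≤ ((a : ℝ) + (b : ℝ) * x) * ((c : ℝ) + (d : ℝ) * x)) ↔
      ∃ q : ℚ, ((c : ℝ) + (d : ℝ) * Real.sqrt 2) / ((a : ℝ) + (b : ℝ) * Real.sqrt 2) = q := by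
  constructor
  · intro H
    have hdet : a * d = b * c := by exact_mod_cast mul_eq_mul_of_forall_nonneg_mul H
    have hab : a ≠ 0 ∨ b ≠ 0 := by
      by_contra! hab
      simp [hab.1, hab.2] at ha
    obtain ⟨q, rfl, rfl⟩ := exists_eq_mul_of_mul_eq_mul hdet hab
    exact ⟨q, by rw [div_eq_iff ha.ne']; push_cast; ring⟩
  · rintro ⟨q, hq⟩
    have hq0 : (0 : ℝ) ≤ q := hq ▸ (div_pos hc ha).le
    rw [div_eq_iff ha.ne'] at hq
    obtain ⟨hca, hdb⟩ := irrational_sqrt_two.eq_zero_of_ratCast_add_mul_eq_zero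
      (p := c - q * a) (q := d - q * b) (by push_cast; linear_combination hq)
    obtain rfl := sub_eq_zero.mp hca
    obtain rfl := sub_eq_zero.mp hdb
    intro x
    calc (0 : ℝ) ≤ q * ((a : ℝ) + b * x) ^ 2 := by positivity
      _ = _ := by push_cast; ring
end

section
/- Let c, d be rational with d ≠ 0. Then there do not exist elements s₁, ..., sₙ ∈ ℚ(√2) such that, writing sᵢ = aᵢ + bᵢ√2 with aᵢ, bᵢ ∈ ℚ, one has for every real x: c + dx = Σᵢ (aᵢ + bᵢx)². Stated positively: if c + dx = Σᵢ (aᵢ + bᵢx)² holds for all real x with aᵢ, bᵢ, c, d rational, then d = 0. -/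
/-- Algebraic core of Dehn's theorem over ℚ(√2): if for all real x we have
c + dx = Σᵢ (aᵢ + bᵢx)² with rational aᵢ, bᵢ, c, d, then d = 0. -/
theorem d_eq_zero_of_xArea_identity
    (c d : ℚ) (n : ℕ) (a b : Fin n → ℚ)
    (h : ∀ x : ℝ, (c : ℝ) + (d : ℝ) * x = ∑ i, ((a i : ℝ) + (b i : ℝ) * x) ^ 2) :
    d = 0 := by
  by_contra hd
  have hd' : (d : ℝ) ≠ 0 := by exact_mod_cast hd
  have h1 := h ((-(c : ℝ) - 1) / d)
  have hlhs : (c : ℝ) + (d : ℝ) * ((-(c : ℝ) - 1) / d) = -1 := by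
    field_simp; ring
  have hnn : (0 : ℝ) ≤ ∑ i, ((a i : ℝ) + (b i : ℝ) * ((-(c : ℝ) - 1) / d)) ^ 2 :=
    Finset.sum_nonneg fun i _ => sq_nonneg _
  linarith [h1, hlhs, hnn]
end

section
/- A rectangle whose sides lie in ℚ(√2) can be cut into finitely many squares with sides in ℚ(√2) only if the ratio of its sides is rational. Area formulation: if 1 × (c + d√2) is tiled by squares with sides in ℚ(√2), then d = 0. -/
/-!
Dehn's argument. For every ℚ-linear `φ : ℝ → ℝ`, the `φ`-area `φ w * φ h` of a `w × h` rectangle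
is additive under tilings: refined to the grid of all tile coordinates, the rectangle and each
tile telescope into sums over grid cells, and every nondegenerate cell lies in exactly one tile.
As `1` and `√2` are ℚ-independent, for `d ≠ 0` some `φ` has `φ 1 = 1` and `φ (c + d√2) = -1`:
the rectangle then has `φ`-area `-1`, while every square has `φ`-area `φ s ^ 2 ≥ 0`.
-/

theorem Irrational.exists_rat_linearMap {x : ℝ} (hx : Irrational x) (t : ℝ) :
    ∃ φ : ℝ →ₗ[ℚ] ℝ, φ 1 = 1 ∧ φ x = t := by
  have hx' : x ∉ Submodule.span ℚ {(1 : ℝ)} := by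
    rw [Submodule.mem_span_singleton]
    rintro ⟨q, rfl⟩
    exact hx ⟨q, by simp [Rat.smul_def]⟩
  obtain ⟨φ, hφ, hφx⟩ := LinearMap.exists_extend_of_notMem (Submodule.span ℚ {1}).subtype hx' t
  exact ⟨φ, congr($hφ ⟨1, Submodule.mem_span_singleton_self 1⟩), hφx⟩

theorem Set.Finite.exists_monotone_through {α : Type*} [LinearOrder α] {s : Set α}
    (hs : s.Finite) {a b : α} (hab : a ≤ b) (hsub : s ⊆ Set.Icc a b) :
    ∃ (N : ℕ) (x : ℕ → α), Monotone x ∧ x 0 = a ∧ x N = b ∧ ∀ r ∈ s, ∃ k ≤ N, x k = r := by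
  set t := insert a (insert b hs.toFinset)
  have ht : ∀ r ∈ t, r ∈ Set.Icc a b := by
    simp only [t, Finset.forall_mem_insert]
    exact ⟨⟨le_rfl, hab⟩, ⟨hab, le_rfl⟩, fun r hr => hsub (hs.mem_toFinset.1 hr)⟩
  have hcard : t.card = (t.card - 1) + 1 :=
    (Nat.succ_pred_eq_of_pos (Finset.card_pos.2 ⟨a, by simp [t]⟩)).symm
  set N := t.card - 1
  set e := t.orderEmbOfFin hcard
  set x : ℕ → α := fun k => e ⟨min k N, by omega⟩
  have hx : ∀ j : Fin (N + 1), x j = e j := fun j =>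
    congrArg e (Fin.ext (min_eq_left (Nat.le_of_lt_succ j.2)))
  refine ⟨N, x, fun k l hkl => e.monotone (Fin.mk_le_mk.2 (min_le_min_right N hkl)), ?_, ?_, ?_⟩
  · rw [hx ⟨0, N.succ_pos⟩, Finset.orderEmbOfFin_zero hcard N.succ_pos]
    exact le_antisymm (t.min'_le a (by simp [t])) (t.le_min' _ _ fun r hr => (ht r hr).1)
  · refine (hx ⟨N, N.lt_succ_self⟩).trans ((Finset.orderEmbOfFin_last hcard N.succ_pos).trans ?_)
    exact le_antisymm (t.max'_le _ _ fun r hr => (ht r hr).2) (t.le_max' b (by simp [t]))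
  · intro r hr
    obtain ⟨j, rfl⟩ : r ∈ Set.range e := by simp [e, t, hr]
    exact ⟨j, Nat.le_of_lt_succ j.2, hx j⟩

namespace Monotone

variable {α : Type*} [LinearOrder α] {x : ℕ → α}

theorem notMem_Ioo_succ (hx : Monotone x) (j k : ℕ) : x j ∉ Set.Ioo (x k) (x (k + 1)) := by
  rintro ⟨hkj, hjk⟩
  have := hx.reflect_lt hkj
  have := hx.reflect_lt hjk
  omega

theorem sum_range_ite_sub {M : Type*} [AddCommGroup M] (hx : Monotone x) (f : α → M)
    {N j j' : ℕ} (hjj' : x j < x j') (hj' : j' ≤ N) :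
    ∑ k ∈ Finset.range N, (if x j ≤ x k ∧ x (k + 1) ≤ x j' then f (x (k + 1)) - f (x k) else 0)
      = f (x j') - f (x j) := by
  classical
  have hcell : ∀ k, (if x j ≤ x k ∧ x (k + 1) ≤ x j' then f (x (k + 1)) - f (x k) else 0)
      = if k ∈ Finset.Ico j j' then f (x (k + 1)) - f (x k) else 0 := by
    intro k
    obtain hk | hk := (hx k.le_succ).eq_or_lt
    · simp [hk]
    refine if_congr ⟨fun ⟨h₁, h₂⟩ => ?_, fun h => ?_⟩ rfl rfl
    · have := hx.reflect_lt (h₁.trans_lt hk)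
      have := hx.reflect_lt (hk.trans_le h₂)
      exact Finset.mem_Ico.2 ⟨by omega, this⟩
    · obtain ⟨h₁, h₂⟩ := Finset.mem_Ico.1 h
      exact ⟨hx h₁, hx h₂⟩
  have hsub : Finset.Ico j j' ⊆ Finset.range N := fun k hk => by
    simp only [Finset.mem_Ico, Finset.mem_range] at hk ⊢; omega
  rw [Finset.sum_congr rfl fun k _ => hcell k, Finset.sum_ite_mem, Finset.inter_eq_right.2 hsub,
    Finset.sum_Ico_sub (fun k => f (x k)) (hx.reflect_lt hjj').le]

end Monotone

open Set in
structure IsRectangleTiling {ι : Type*} (p p' q q' : ι → ℝ) (a b c d : ℝ) : Prop where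
  left_lt_right : ∀ i, p i < p' i
  bottom_lt_top : ∀ i, q i < q' i
  iUnion_eq : ⋃ i, Icc (p i) (p' i) ×ˢ Icc (q i) (q' i) = Icc a b ×ˢ Icc c d
  pairwise_disjoint : Pairwise fun i j =>
    Disjoint (Ioo (p i) (p' i) ×ˢ Ioo (q i) (q' i)) (Ioo (p j) (p' j) ×ˢ Ioo (q j) (q' j))

namespace IsRectangleTiling

open Set

variable {ι : Type*} {p p' q q' : ι → ℝ} {a b c d : ℝ}

theorem Icc_subset (T : IsRectangleTiling p p' q q' a b c d) (i : ι) :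
    Icc (p i) (p' i) ⊆ Icc a b ∧ Icc (q i) (q' i) ⊆ Icc c d := by
  have h := T.iUnion_eq ▸ subset_iUnion (fun i => Icc (p i) (p' i) ×ˢ Icc (q i) (q' i)) i
  refine ((prod_subset_prod_iff.1 h).resolve_right ?_)
  exact not_or.2 ⟨(nonempty_Icc.2 (T.left_lt_right i).le).ne_empty,
    (nonempty_Icc.2 (T.bottom_lt_top i).le).ne_empty⟩

theorem existsUnique_of_cell (T : IsRectangleTiling p p' q q' a b c d) {u u' v v' : ℝ}
    (hu : u < u') (hv : v < v') (hux : Icc u u' ⊆ Icc a b) (hvy : Icc v v' ⊆ Icc c d)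
    (hp : ∀ i, p i ∉ Ioo u u' ∧ p' i ∉ Ioo u u') (hq : ∀ i, q i ∉ Ioo v v' ∧ q' i ∉ Ioo v v') :
    ∃! i, (p i ≤ u ∧ u' ≤ p' i) ∧ (q i ≤ v ∧ v' ≤ q' i) := by
  obtain ⟨mx, hmx, hmx'⟩ := exists_between hu
  obtain ⟨my, hmy, hmy'⟩ := exists_between hv
  have hm : (mx, my) ∈ ⋃ i, Icc (p i) (p' i) ×ˢ Icc (q i) (q' i) :=
    T.iUnion_eq ▸ ⟨hux ⟨hmx.le, hmx'.le⟩, hvy ⟨hmy.le, hmy'.le⟩⟩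
  simp only [mem_iUnion, mem_prod, mem_Icc] at hm
  obtain ⟨i, ⟨hpi, hpi'⟩, hqi, hqi'⟩ := hm
  -- a tile containing an inner point of the cell covers it, since none of its edges cuts the cell
  have hi : (p i ≤ u ∧ u' ≤ p' i) ∧ (q i ≤ v ∧ v' ≤ q' i) := by
    refine ⟨⟨?_, ?_⟩, ?_, ?_⟩ <;> by_contra h <;> push Not at h
    exacts [(hp i).1 ⟨h, by linarith⟩, (hp i).2 ⟨by linarith, h⟩,
      (hq i).1 ⟨h, by linarith⟩, (hq i).2 ⟨by linarith, h⟩]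
  have hinner : ∀ j, (p j ≤ u ∧ u' ≤ p' j) ∧ (q j ≤ v ∧ v' ≤ q' j) →
      (mx, my) ∈ Ioo (p j) (p' j) ×ˢ Ioo (q j) (q' j) := fun j ⟨⟨h₁, h₂⟩, h₃, h₄⟩ =>
    ⟨⟨by linarith, by linarith⟩, by linarith, by linarith⟩
  refine ⟨i, hi, fun j hj => by_contra fun hji => ?_⟩
  exact disjoint_left.1 (T.pairwise_disjoint hji) (hinner j hj) (hinner i hi)

theorem sum_mul_sub_eq [Fintype ι] {R : Type*} [Ring R]
    (T : IsRectangleTiling p p' q q' a b c d) (hab : a ≤ b) (hcd : c ≤ d) (f g : ℝ → R) :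
    ∑ i, (f (p' i) - f (p i)) * (g (q' i) - g (q i)) = (f b - f a) * (g d - g c) := by
  classical
  have hpI : ∀ i, p i ∈ Icc a b ∧ p' i ∈ Icc a b := fun i =>
    ⟨(T.Icc_subset i).1 (left_mem_Icc.2 (T.left_lt_right i).le),
      (T.Icc_subset i).1 (right_mem_Icc.2 (T.left_lt_right i).le)⟩
  have hqI : ∀ i, q i ∈ Icc c d ∧ q' i ∈ Icc c d := fun i =>
    ⟨(T.Icc_subset i).2 (left_mem_Icc.2 (T.bottom_lt_top i).le),
      (T.Icc_subset i).2 (right_mem_Icc.2 (T.bottom_lt_top i).le)⟩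
  obtain ⟨N, x, hx, hx0, hxN, hX⟩ :=
    ((finite_range p).union (finite_range p')).exists_monotone_through hab
      (union_subset (range_subset_iff.2 fun i => (hpI i).1) (range_subset_iff.2 fun i => (hpI i).2))
  obtain ⟨M, y, hy, hy0, hyM, hY⟩ :=
    ((finite_range q).union (finite_range q')).exists_monotone_through hcd
      (union_subset (range_subset_iff.2 fun i => (hqI i).1) (range_subset_iff.2 fun i => (hqI i).2))
  choose jp hjp using fun i => hX (p i) (Or.inl ⟨i, rfl⟩)
  choose jp' hjp' using fun i => hX (p' i) (Or.inr ⟨i, rfl⟩)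
  choose jq hjq using fun i => hY (q i) (Or.inl ⟨i, rfl⟩)
  choose jq' hjq' using fun i => hY (q' i) (Or.inr ⟨i, rfl⟩)
  set Δf : ℕ → R := fun k => f (x (k + 1)) - f (x k)
  set Δg : ℕ → R := fun l => g (y (l + 1)) - g (y l)
  have hrow : ∀ i, f (p' i) - f (p i) =
      ∑ k ∈ Finset.range N, if p i ≤ x k ∧ x (k + 1) ≤ p' i then Δf k else 0 := fun i => by
    rw [← (hjp i).2, ← (hjp' i).2]
    exact (hx.sum_range_ite_sub f ((hjp i).2 ▸ (hjp' i).2 ▸ T.left_lt_right i) (hjp' i).1).symm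
  have hcol : ∀ i, g (q' i) - g (q i) =
      ∑ l ∈ Finset.range M, if q i ≤ y l ∧ y (l + 1) ≤ q' i then Δg l else 0 := fun i => by
    rw [← (hjq i).2, ← (hjq' i).2]
    exact (hy.sum_range_ite_sub g ((hjq i).2 ▸ (hjq' i).2 ▸ T.bottom_lt_top i) (hjq' i).1).symm
  have hcell : ∀ k ∈ Finset.range N, ∀ l ∈ Finset.range M,
      ∑ i, (if (p i ≤ x k ∧ x (k + 1) ≤ p' i) ∧ (q i ≤ y l ∧ y (l + 1) ≤ q' i)
        then Δf k * Δg l else 0) = Δf k * Δg l := by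
    intro k hk l hl
    rw [Finset.mem_range] at hk hl
    obtain hxk | hxk := (hx k.le_succ).eq_or_lt
    · simp [Δf, hxk]
    obtain hyl | hyl := (hy l.le_succ).eq_or_lt
    · simp [Δg, hyl]
    obtain ⟨i₀, hi₀, huniq⟩ := T.existsUnique_of_cell hxk hyl
      (Icc_subset_Icc (hx0 ▸ hx k.zero_le) (hxN ▸ hx hk))
      (Icc_subset_Icc (hy0 ▸ hy l.zero_le) (hyM ▸ hy hl))
      (fun i => ⟨(hjp i).2 ▸ hx.notMem_Ioo_succ _ k, (hjp' i).2 ▸ hx.notMem_Ioo_succ _ k⟩)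
      (fun i => ⟨(hjq i).2 ▸ hy.notMem_Ioo_succ _ l, (hjq' i).2 ▸ hy.notMem_Ioo_succ _ l⟩)
    rw [Fintype.sum_eq_single i₀ fun i hi => if_neg (mt (huniq i) hi), if_pos hi₀]
  calc ∑ i, (f (p' i) - f (p i)) * (g (q' i) - g (q i))
      = ∑ i, ∑ k ∈ Finset.range N, ∑ l ∈ Finset.range M,
          if (p i ≤ x k ∧ x (k + 1) ≤ p' i) ∧ (q i ≤ y l ∧ y (l + 1) ≤ q' i)
          then Δf k * Δg l else 0 := by
        simp only [hrow, hcol, Finset.sum_mul_sum, ite_zero_mul_ite_zero]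
    _ = ∑ k ∈ Finset.range N, ∑ l ∈ Finset.range M, ∑ i,
          if (p i ≤ x k ∧ x (k + 1) ≤ p' i) ∧ (q i ≤ y l ∧ y (l + 1) ≤ q' i)
          then Δf k * Δg l else 0 := by
        rw [Finset.sum_comm]
        exact Finset.sum_congr rfl fun k _ => Finset.sum_comm
    _ = ∑ k ∈ Finset.range N, ∑ l ∈ Finset.range M, Δf k * Δg l :=
        Finset.sum_congr rfl fun k hk => Finset.sum_congr rfl fun l hl => hcell k hk l hl
    _ = (f b - f a) * (g d - g c) := by
        rw [← Finset.sum_mul_sum, Finset.sum_range_sub (fun k => f (x k)),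
          Finset.sum_range_sub (fun l => g (y l)), hx0, hxN, hy0, hyM]

end IsRectangleTiling

/-- Dehn's theorem for ℚ(√2): if the rectangle 1 × (c + d√2) is tiled by finitely
many axis-aligned squares whose side lengths lie in ℚ(√2), then d = 0 (i.e. the
ratio of the sides of the rectangle is rational). -/
theorem dehn_Q_sqrt_two
    (c d : ℚ) (hpos : 0 < (c : ℝ) + (d : ℝ) * Real.sqrt 2)
    (h : ∃ (n : ℕ) (p q : Fin n → ℝ) (a b : Fin n → ℚ),
      (∀ i, 0 < (a i : ℝ) + (b i : ℝ) * Real.sqrt 2) ∧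
      (⋃ i, Set.Icc (p i) (p i + ((a i : ℝ) + (b i : ℝ) * Real.sqrt 2)) ×ˢ
            Set.Icc (q i) (q i + ((a i : ℝ) + (b i : ℝ) * Real.sqrt 2)))
        = Set.Icc (0 : ℝ) 1 ×ˢ Set.Icc (0 : ℝ) ((c : ℝ) + (d : ℝ) * Real.sqrt 2) ∧
      (∀ i j, i ≠ j →
        Disjoint
          (Set.Ioo (p i) (p i + ((a i : ℝ) + (b i : ℝ) * Real.sqrt 2)) ×ˢ
           Set.Ioo (q i) (q i + ((a i : ℝ) + (b i : ℝ) * Real.sqrt 2)))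
          (Set.Ioo (p j) (p j + ((a j : ℝ) + (b j : ℝ) * Real.sqrt 2)) ×ˢ
           Set.Ioo (q j) (q j + ((a j : ℝ) + (b j : ℝ) * Real.sqrt 2))))) :
    d = 0 := by
  obtain ⟨n, p, q, a, b, hside, hcover, hdisj⟩ := h
  by_contra hd
  obtain ⟨φ, hφ1, hφ2⟩ := irrational_sqrt_two.exists_rat_linearMap ((-1 - c) / d)
  have hφH : φ (c + d * √2) = -1 := by
    rw [show (c : ℝ) + d * √2 = c • (1 : ℝ) + d • √2 by simp [Rat.smul_def], map_add, map_smul,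
      map_smul, hφ1, hφ2, Rat.smul_def, Rat.smul_def]
    field_simp
    ring
  have T : IsRectangleTiling p (fun i => p i + (a i + b i * √2))
      q (fun i => q i + (a i + b i * √2)) 0 1 0 (c + d * √2) :=
    ⟨fun i => by simpa using hside i, fun i => by simpa using hside i, hcover, hdisj⟩
  have key := T.sum_mul_sub_eq zero_le_one hpos.le φ φ
  simp only [← map_sub, add_sub_cancel_left, map_zero, sub_zero, hφ1, hφH] at key
  linarith [Finset.sum_nonneg fun i (_ : i ∈ Finset.univ) => mul_self_nonneg (φ (a i + b i * √2))]
end
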